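/- arXiv:1405.3385 — 3 statements merged into one kernel-verified Lean document; each statement's English description precedes it below -/
import Mathlib

section
/- There exists a constant C > 0 such that for every X ∈ H¹(ℝ) (identified with its continuous representative) and every ε ∈ (0, 1], the sequence x = (X(εn))_{n ∈ ℤ} belongs to l²(ℤ) and satisfies ‖x‖_{l²} ≤ C ε^{−1/2} ‖X‖_{H¹(ℝ)}. -/
/-!
For `a ≤ t`, writing `X a = X t - ∫ₐᵗ X'` and applying Cauchy–Schwarz gives
`X(a)² ≤ 2 X(t)² + 2ε ∫_{(a, a+ε]} X'²` for `t ∈ (a, a+ε]`; averaging in `t` yields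
`ε X(a)² ≤ 2 ∫_{(a, a+ε]} X² + 2ε² ∫_{(a, a+ε]} X'²`. The intervals `(εn, ε(n+1)]` tile `ℝ`,
so summing over `n` gives `∑ₙ X(εn)² ≤ (2/ε) ‖X‖²_{H¹}` when `ε ≤ 1`.
-/

open MeasureTheory Real Filter Set

theorem sq_integral_le_measureReal_mul_integral_sq {α : Type*} [MeasurableSpace α]
    {μ : Measure α} [IsFiniteMeasure μ] {g : α → ℝ} (hg : MemLp g 2 μ) :
    (∫ x, g x ∂μ) ^ 2 ≤ μ.real univ * ∫ x, g x ^ 2 ∂μ := by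
  have hg1 : Integrable g μ := hg.integrable one_le_two
  -- the quadratic `c ↦ ∫ (g - c)²` is nonnegative, so its discriminant is nonpositive
  have hquad : ∀ c : ℝ, 0 ≤ μ.real univ * (c * c) + (-2 * ∫ x, g x ∂μ) * c + ∫ x, g x ^ 2 ∂μ := by
    intro c
    have hexp : ∫ x, (g x - c) ^ 2 ∂μ
        = μ.real univ * (c * c) + (-2 * ∫ x, g x ∂μ) * c + ∫ x, g x ^ 2 ∂μ := by
      have hsq : (fun x => (g x - c) ^ 2) = fun x => (g x ^ 2 - 2 * c * g x) + c ^ 2 := by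
        ext x; ring
      have hlin : Integrable (fun x => g x ^ 2 - 2 * c * g x) μ :=
        hg.integrable_sq.sub (hg1.const_mul _)
      rw [hsq, integral_add hlin (integrable_const _),
        integral_sub hg.integrable_sq (hg1.const_mul _), integral_const_mul, integral_const,
        smul_eq_mul]
      ring
    exact hexp ▸ integral_nonneg fun x => sq_nonneg _
  have := discrim_le_zero hquad
  rw [discrim] at this
  linarith

theorem sq_intervalIntegral_le_mul_integral_sq {g : ℝ → ℝ} {a b : ℝ} (hab : a ≤ b)
    (hg : MemLp g 2 (volume.restrict (Ioc a b))) :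
    (∫ t in a..b, g t) ^ 2 ≤ (b - a) * ∫ t in Ioc a b, g t ^ 2 := by
  have : IsFiniteMeasure (volume.restrict (Ioc a b)) :=
    isFiniteMeasure_restrict.2 measure_Ioc_lt_top.ne
  simpa [intervalIntegral.integral_of_le hab, hab] using
    sq_integral_le_measureReal_mul_integral_sq hg

theorem sq_le_two_mul_sq_add_two_mul_integral_sq {X X' : ℝ → ℝ} {a t : ℝ} (hat : a ≤ t)
    (hFTC : X t - X a = ∫ s in a..t, X' s) (hX' : MemLp X' 2 (volume.restrict (Ioc a t))) :
    X a ^ 2 ≤ 2 * X t ^ 2 + 2 * (t - a) * ∫ s in Ioc a t, X' s ^ 2 := by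
  have hCS := sq_intervalIntegral_le_mul_integral_sq hat hX'
  rw [← hFTC] at hCS
  nlinarith [sq_nonneg (X t + (X t - X a))]

theorem mul_sq_le_two_mul_setIntegral_sq_add {X X' : ℝ → ℝ} {a h : ℝ} (hh : 0 ≤ h)
    (hFTC : ∀ t ∈ Ioc a (a + h), X t - X a = ∫ s in a..t, X' s)
    (hX : IntegrableOn (fun t => X t ^ 2) (Ioc a (a + h)))
    (hX' : MemLp X' 2 (volume.restrict (Ioc a (a + h)))) :
    h * X a ^ 2 ≤
      2 * (∫ t in Ioc a (a + h), X t ^ 2) + 2 * h ^ 2 * ∫ t in Ioc a (a + h), X' t ^ 2 := by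
  set J := ∫ t in Ioc a (a + h), X' t ^ 2
  have hpt : ∀ t ∈ Ioc a (a + h), X a ^ 2 ≤ 2 * X t ^ 2 + 2 * h * J := by
    intro t ht
    have hsub : Ioc a t ⊆ Ioc a (a + h) := Ioc_subset_Ioc_right ht.2
    have hJ : ∫ s in Ioc a t, X' s ^ 2 ≤ J :=
      setIntegral_mono_set hX'.integrable_sq (Eventually.of_forall fun _ => sq_nonneg _)
        hsub.eventuallyLE
    have hJ0 : 0 ≤ ∫ s in Ioc a t, X' s ^ 2 := integral_nonneg fun _ => sq_nonneg _
    have := sq_le_two_mul_sq_add_two_mul_integral_sq ht.1.le (hFTC t ht)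
      (hX'.mono_measure (Measure.restrict_mono hsub le_rfl))
    nlinarith [ht.2]
  have hvol : volume.real (Ioc a (a + h)) = h := by simp [hh]
  have hfin : volume (Ioc a (a + h)) ≠ ⊤ := measure_Ioc_lt_top.ne
  have hrhs : IntegrableOn (fun t => 2 * X t ^ 2 + 2 * h * J) (Ioc a (a + h)) :=
    (hX.const_mul 2).add (integrableOn_const hfin)
  have hint := setIntegral_mono_on (integrableOn_const hfin) hrhs measurableSet_Ioc hpt
  rw [setIntegral_const, integral_add (hX.const_mul 2) (integrableOn_const hfin),
    integral_const_mul, setIntegral_const, hvol, smul_eq_mul, smul_eq_mul] at hint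
  linarith

theorem MeasureTheory.Integrable.hasSum_setIntegral_Ioc_zsmul {E : Type*}
    [NormedAddCommGroup E] [NormedSpace ℝ E] {μ : Measure ℝ} {f : ℝ → E} (hf : Integrable f μ)
    {p : ℝ} (hp : 0 < p) :
    HasSum (fun n : ℤ => ∫ x in Ioc (n • p) ((n + 1) • p), f x ∂μ) (∫ x, f x ∂μ) := by
  rw [← setIntegral_univ, ← iUnion_Ioc_zsmul hp]
  exact hasSum_integral_iUnion (fun _ => measurableSet_Ioc) (pairwise_disjoint_Ioc_zsmul p)
    hf.integrableOn

theorem summable_sq_apply_mul_intCast_and_tsum_le {X X' : ℝ → ℝ} (hX : MemLp X 2 volume)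
    (hX' : MemLp X' 2 volume) (hFTC : ∀ a b, X b - X a = ∫ t in a..b, X' t) {ε : ℝ}
    (hε : 0 < ε) (hε1 : ε ≤ 1) :
    Summable (fun n : ℤ => X (ε * n) ^ 2) ∧
      ∑' n : ℤ, X (ε * n) ^ 2 ≤ 2 / ε * ((∫ x, X x ^ 2) + ∫ x, X' x ^ 2) := by
  set I : ℤ → Set ℝ := fun n => Ioc (n • ε) ((n + 1) • ε)
  have hsum : HasSum (fun n => 2 / ε * ((∫ x in I n, X x ^ 2) + ∫ x in I n, X' x ^ 2))
      (2 / ε * ((∫ x, X x ^ 2) + ∫ x, X' x ^ 2)) :=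
    ((hX.integrable_sq.hasSum_setIntegral_Ioc_zsmul hε).add
      (hX'.integrable_sq.hasSum_setIntegral_Ioc_zsmul hε)).mul_left _
  have hle : ∀ n : ℤ,
      X (ε * n) ^ 2 ≤ 2 / ε * ((∫ x in I n, X x ^ 2) + ∫ x in I n, X' x ^ 2) := by
    intro n
    have hI : I n = Ioc (ε * n) (ε * n + ε) := by
      simp only [I, zsmul_eq_mul]
      congr 1 <;> push_cast <;> ring
    have hQ : 0 ≤ ∫ x in I n, X' x ^ 2 := integral_nonneg fun _ => sq_nonneg _
    have := mul_sq_le_two_mul_setIntegral_sq_add (a := ε * n) hε.le (fun t _ => hFTC _ t)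
      hX.integrable_sq.integrableOn (hX'.restrict _)
    rw [← hI] at this
    have hε2 : ε ^ 2 ≤ 1 := pow_le_one₀ hε.le hε1
    rw [div_mul_eq_mul_div, le_div_iff₀ hε]
    nlinarith [mul_le_mul_of_nonneg_right hε2 hQ]
  have hs : Summable (fun n : ℤ => X (ε * n) ^ 2) :=
    Summable.of_nonneg_of_le (fun _ => sq_nonneg _) hle hsum.summable
  exact ⟨hs, (hs.tsum_le_tsum hle hsum.summable).trans_eq hsum.tsum_eq⟩

/-- there exists `C > 0` such that for every `X ∈ H¹(ℝ)` (continuous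
representative, with weak derivative `X' ∈ L²` in the sense of the fundamental theorem of
calculus) and every `ε ∈ (0,1]`, the sampled sequence `(X(εn))_{n∈ℤ}` lies in `l²(ℤ)` with
`‖(X(εn))_n‖_{l²} ≤ C ε^{−1/2} ‖X‖_{H¹}`. -/
theorem sampling_H1_to_l2 :
    ∃ C : ℝ, 0 < C ∧
      ∀ X X' : ℝ → ℝ, Continuous X →
        MeasureTheory.MemLp X 2 MeasureTheory.volume →
        MeasureTheory.MemLp X' 2 MeasureTheory.volume →
        (∀ a b : ℝ, X b - X a = ∫ t in a..b, X' t) →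
        ∀ ε : ℝ, ε ∈ Set.Ioc (0 : ℝ) 1 →
          Summable (fun n : ℤ => (X (ε * n)) ^ 2) ∧
          Real.sqrt (∑' n : ℤ, (X (ε * n)) ^ 2) ≤
            C * ε ^ (-(1 : ℝ)/2) *
              Real.sqrt ((∫ x : ℝ, (X x) ^ 2) + ∫ x : ℝ, (X' x) ^ 2) := by
  refine ⟨√2, by positivity, fun X X' _ hX hX' hFTC ε ⟨hε, hε1⟩ => ?_⟩
  obtain ⟨hs, hle⟩ := summable_sq_apply_mul_intCast_and_tsum_le hX hX' hFTC hε hε1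
  refine ⟨hs, ?_⟩
  calc √(∑' n : ℤ, X (ε * n) ^ 2)
      ≤ √(2 / ε * ((∫ x, X x ^ 2) + ∫ x, X' x ^ 2)) := sqrt_le_sqrt hle
    _ = √2 * ε ^ (-(1 : ℝ) / 2) * √((∫ x, X x ^ 2) + ∫ x, X' x ^ 2) := by
      rw [sqrt_mul (by positivity), sqrt_div' _ hε.le, neg_div, rpow_neg hε.le, ← sqrt_eq_rpow,
        div_eq_mul_inv]
end

section
/- Let W ∈ C([−τ₀, τ₁], H^s(ℝ)) solve the log-KdV equation 2 W_τ + (1/12) W_ξξξ + (g(W))_ξ = 0, s ≥ 6 an integer, with W ≥ r_W > −1. Fix ε₀ ∈ (0,1], and for ε ∈ (0, ε₀] let 𝒲 ∈ C([−τ₀ε^{−3}, τ₁ε^{−3}], l²(ℤ)) satisfy, for some ε-independent constants r > −1 and R > 0, the bound r ≤ W(ε(n−t), ε³t) + 𝒲_n(t) ≤ R for all n ∈ ℤ and |t| in range. Define the nonlinear remainder ℛ_n(W, 𝒲)(t) := [Ṽ_ε'(W_n + 𝒲_n) − Ṽ_ε'(W_n)] − [Ṽ_ε'(W_{n−1} +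 𝒲_{n−1}) − Ṽ_ε'(W_{n−1})] − [(1 + ε² g'(W_n)) 𝒲_n − (1 + ε² g'(W_{n−1})) 𝒲_{n−1}], where W_n := W(ε(n−t), ε³t). Then there exists a constant C_{r,R,W} > 0, independent of ε and not increasing as ε₀ shrinks, such that for all ε ∈ (0, ε₀] and t ∈ [−τ₀ε^{−3}, τ₁ε^{−3}], ‖ℛ(W, 𝒲)(t)‖_{l²} ≤ C_{r,R,W} ( ε² ‖𝒲(t)‖_{l²}² + ε⁴ ‖𝒲(t)‖_{l²} + ε^{9/2} ). -/
open MeasureTheory Real Filter Set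
open scoped ENNReal

/-- `Ṽ_ε'(w) = (1+w)^{1+ε²} − 1`. -/
noncomputable def Vp (ε w : ℝ) : ℝ := (1 + w) ^ (1 + ε ^ 2) - 1

/-- The log-KdV nonlinearity `g(W) = (1+W) log(1+W)`; `g'(W) = 1 + log(1+W)`. -/
noncomputable def gfun (w : ℝ) : ℝ := (1 + w) * Real.log (1 + w)

/-- `g'(w) = 1 + log(1+w)`. -/
noncomputable def gp (w : ℝ) : ℝ := 1 + Real.log (1 + w)

/-- `l²(ℤ)` norm of a bilateral sequence. -/
noncomputable def l2norm (x : ℤ → ℝ) : ℝ := Real.sqrt (∑' n : ℤ, (x n) ^ 2)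

/-- `k`-th spatial derivative `∂_ξ^k W(ξ,τ)`. -/
noncomputable def Dxi (W : ℝ → ℝ → ℝ) (k : ℕ) (ξ τ : ℝ) : ℝ :=
  iteratedDeriv k (fun x => W x τ) ξ

/-- `W ∈ C([−τ₀,τ₁], H^s(ℝ))`. -/
def RegCHs (W : ℝ → ℝ → ℝ) (s : ℕ) (τ₀ τ₁ : ℝ) : Prop :=
  Continuous (fun q : ℝ × ℝ => W q.1 q.2) ∧
  (∀ τ ∈ Set.Icc (-τ₀) τ₁, ContDiff ℝ s (fun x => W x τ) ∧
    ∀ k ≤ s, MeasureTheory.MemLp (fun x => Dxi W k x τ) 2 MeasureTheory.volume) ∧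
  ∃ B : ℝ, ∀ τ ∈ Set.Icc (-τ₀) τ₁, ∀ k ≤ s,
    MeasureTheory.eLpNorm (fun x => Dxi W k x τ) 2 MeasureTheory.volume ≤ ENNReal.ofReal B

/-- `W` solves the log-KdV equation `2 W_τ + (1/12) W_ξξξ + (g(W))_ξ = 0` on `[−τ₀,τ₁]`. -/
def SolvesLogKdV (W : ℝ → ℝ → ℝ) (τ₀ τ₁ : ℝ) : Prop :=
  ∀ ξ : ℝ, ∀ τ ∈ Set.Icc (-τ₀) τ₁,
    2 * deriv (fun s => W ξ s) τ + (1/12) * Dxi W 3 ξ τ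
      + deriv (fun x => gfun (W x τ)) ξ = 0

/-- The nonlinear remainder `ℛ_n(W,𝒲)(t)` of the FPU system around the log-KdV
approximation. -/
noncomputable def RemR (W : ℝ → ℝ → ℝ) (ε t : ℝ) (V : ℤ → ℝ) (n : ℤ) : ℝ :=
  (Vp ε (W (ε * ((n : ℝ) - t)) (ε ^ 3 * t) + V n)
      - Vp ε (W (ε * ((n : ℝ) - t)) (ε ^ 3 * t)))
    - (Vp ε (W (ε * ((n : ℝ) - 1 - t)) (ε ^ 3 * t) + V (n - 1))
      - Vp ε (W (ε * ((n : ℝ) - 1 - t)) (ε ^ 3 * t)))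
    - ((1 + ε ^ 2 * gp (W (ε * ((n : ℝ) - t)) (ε ^ 3 * t))) * V n
      - (1 + ε ^ 2 * gp (W (ε * ((n : ℝ) - 1 - t)) (ε ^ 3 * t))) * V (n - 1))

/-!
With `h n := Ṽ_ε'(W_n + 𝒲_n) - Ṽ_ε'(W_n) - (1 + ε² g'(W_n)) 𝒲_n` the remainder is
`h n - h (n - 1)`, so its `l²` norm is at most `2 ‖h‖`. Split `h n` into the Taylor remainder of
`Ṽ_ε'` at `W_n` and `(Ṽ_ε''(W_n) - 1 - ε² g'(W_n)) 𝒲_n`. The first part is `O(ε² 𝒲_n²)`, since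
`Ṽ_ε''' (w) = (1 + ε²) ε² (1 + w)^(ε² - 1)` is `O(ε²)` above `min r_W r > -1`. In the second, with
`p = ε²` and `L = log (1 + W_n)`, the coefficient `(1 + p) e^(p L) - 1 - p (1 + L)` is the Taylor
remainder of `p ↦ (1 + p) e^(p L)` at `p = 0`, hence `O(ε⁴)` as long as `L` stays bounded. It does:
`W ≥ r_W`, and `W` is bounded above by the embedding `H¹(ℝ) ⊂ L^∞(ℝ)`, i.e.
`u x ^ 2 ≤ ‖u‖² + ‖u'‖²`. Finally `‖𝒲²‖_{l²} ≤ ‖𝒲‖²_{l²}`.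
-/

open Topology

lemma integral_sq_eq_lpNorm_sq {α : Type*} [MeasurableSpace α] {μ : Measure α} {f : α → ℝ}
    (hf : AEStronglyMeasurable f μ) : ∫ x, f x ^ 2 ∂μ = lpNorm f 2 μ ^ 2 := by
  rw [lpNorm_eq_integral_norm_rpow_toReal two_ne_zero ENNReal.ofNat_ne_top hf]
  have h0 : 0 ≤ ∫ x, ‖f x‖ ^ (2 : ℝ) ∂μ := integral_nonneg fun _ => by positivity
  rw [ENNReal.toReal_ofNat, ← Real.rpow_natCast, ← Real.rpow_mul h0]
  norm_num [Real.rpow_two]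

lemma integral_sq_le_of_eLpNorm_le {α : Type*} [MeasurableSpace α] {μ : Measure α}
    {f : α → ℝ} (hf : MemLp f 2 μ) {B : ℝ} (hB : eLpNorm f 2 μ ≤ ENNReal.ofReal B) :
    ∫ x, f x ^ 2 ∂μ ≤ B ^ 2 := by
  have hnorm : lpNorm f 2 μ ≤ |B| := by
    rw [← toReal_eLpNorm hf.1]
    calc (eLpNorm f 2 μ).toReal ≤ (ENNReal.ofReal B).toReal :=
          ENNReal.toReal_mono ENNReal.ofReal_ne_top hB
      _ ≤ |B| := by rw [ENNReal.toReal_ofReal']; exact max_le (le_abs_self B) (abs_nonneg B)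
  rw [integral_sq_eq_lpNorm_sq hf.1, ← sq_abs B]
  exact pow_le_pow_left₀ lpNorm_nonneg hnorm 2

lemma sq_le_integral_sq_add_integral_deriv_sq {u : ℝ → ℝ} (hu : ContDiff ℝ 1 u)
    (hu2 : Integrable (fun y => u y ^ 2)) (hu2' : Integrable (fun y => deriv u y ^ 2)) (x : ℝ) :
    u x ^ 2 ≤ (∫ y, u y ^ 2) + ∫ y, deriv u y ^ 2 := by
  have hd : ∀ y, HasDerivAt (fun z => u z ^ 2) (2 * u y * deriv u y) y := fun y =>
    (((hu.differentiable one_ne_zero y).hasDerivAt).fun_pow 2).congr_deriv (by ring)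
  have hbound : ∀ y, |2 * u y * deriv u y| ≤ u y ^ 2 + deriv u y ^ 2 := fun y =>
    abs_le.mpr ⟨by nlinarith [sq_nonneg (u y + deriv u y)], two_mul_le_add_sq _ _⟩
  have hint : Integrable (fun y => 2 * u y * deriv u y) :=
    (hu2.add hu2').mono' ((continuous_const.mul hu.continuous).mul
      (hu.continuous_deriv le_rfl)).aestronglyMeasurable (ae_of_all _ hbound)
  have hlim : Tendsto (fun z => u z ^ 2) atBot (𝓝 0) :=
    tendsto_zero_of_hasDerivAt_of_integrableOn_Iic (a := x) (fun y _ => hd y)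
      hint.integrableOn hu2.integrableOn
  have hftc : ∫ y in Iic x, 2 * u y * deriv u y = u x ^ 2 := by
    simpa using integral_Iic_of_hasDerivAt_of_tendsto' (fun y _ => hd y) hint.integrableOn hlim
  calc u x ^ 2 = ∫ y in Iic x, 2 * u y * deriv u y := hftc.symm
    _ ≤ ∫ y in Iic x, (u y ^ 2 + deriv u y ^ 2) :=
        setIntegral_mono hint.integrableOn (hu2.add hu2').integrableOn
          fun y => (le_abs_self _).trans (hbound y)
    _ ≤ ∫ y, (u y ^ 2 + deriv u y ^ 2) :=
        setIntegral_le_integral (hu2.add hu2') (ae_of_all _ fun y => by positivity)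
    _ = (∫ y, u y ^ 2) + ∫ y, deriv u y ^ 2 := integral_add hu2 hu2'

lemma RegCHs.exists_abs_le {W : ℝ → ℝ → ℝ} {s : ℕ} {τ₀ τ₁ : ℝ} (hs : 1 ≤ s)
    (hreg : RegCHs W s τ₀ τ₁) : ∃ M, ∀ ξ, ∀ τ ∈ Icc (-τ₀) τ₁, |W ξ τ| ≤ M := by
  obtain ⟨-, hmem, B, hB⟩ := hreg
  refine ⟨√(2 * B ^ 2), fun ξ τ hτ => ?_⟩
  obtain ⟨hcd, hL2⟩ := hmem τ hτ
  have h0 := hL2 0 s.zero_le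
  have h1 := hL2 1 hs
  have hB0 := hB τ hτ 0 s.zero_le
  have hB1 := hB τ hτ 1 hs
  simp only [Dxi, iteratedDeriv_zero, iteratedDeriv_one] at h0 h1 hB0 hB1
  have := sq_le_integral_sq_add_integral_deriv_sq (hcd.of_le (by exact_mod_cast hs))
    h0.integrable_sq h1.integrable_sq ξ
  rw [← Real.sqrt_sq_eq_abs]
  exact Real.sqrt_le_sqrt (by linarith [integral_sq_le_of_eLpNorm_le h0 hB0,
    integral_sq_le_of_eLpNorm_le h1 hB1])

lemma abs_sub_sub_mul_sub_le_of_hasDerivAt {f f' f'' : ℝ → ℝ} {a b K : ℝ}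
    (hf : ∀ x ∈ uIcc a b, HasDerivAt f (f' x) x)
    (hf' : ∀ x ∈ uIcc a b, HasDerivAt f' (f'' x) x) (hK : ∀ x ∈ uIcc a b, |f'' x| ≤ K) :
    |f b - f a - f' a * (b - a)| ≤ K * (b - a) ^ 2 := by
  have hK0 : 0 ≤ K := (abs_nonneg _).trans (hK a left_mem_uIcc)
  have hslope : ∀ x ∈ uIcc a b, ‖f' x - f' a‖ ≤ K * |b - a| := fun x hx =>
    ((convex_uIcc a b).norm_image_sub_le_of_norm_hasDerivWithin_le
      (fun y hy => (hf' y hy).hasDerivWithinAt) hK left_mem_uIcc hx).trans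
      (mul_le_mul_of_nonneg_left (abs_sub_left_of_mem_uIcc hx) hK0)
  have hg : ∀ x ∈ uIcc a b,
      HasDerivWithinAt (fun y => f y - f' a * y) (f' x - f' a) (uIcc a b) x := fun x hx =>
    ((hf x hx).sub (by simpa using (hasDerivAt_id x).const_mul (f' a))).hasDerivWithinAt
  calc |f b - f a - f' a * (b - a)| = ‖(f b - f' a * b) - (f a - f' a * a)‖ := by
        rw [Real.norm_eq_abs]; ring_nf
    _ ≤ K * |b - a| * ‖b - a‖ :=
        (convex_uIcc a b).norm_image_sub_le_of_norm_hasDerivWithin_le hg hslope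
          left_mem_uIcc right_mem_uIcc
    _ = K * (b - a) ^ 2 := by rw [Real.norm_eq_abs, mul_assoc, ← sq, sq_abs]

lemma rpow_le_max_inv_one {x y a : ℝ} (hy : 0 < y) (hyx : y ≤ x) (ha0 : a ≤ 0) (ha1 : -1 ≤ a) :
    x ^ a ≤ max y⁻¹ 1 := by
  rcases le_or_gt 1 x with hx | hx
  · exact (Real.rpow_le_one_of_one_le_of_nonpos hx ha0).trans (le_max_right _ _)
  · calc x ^ a ≤ y ^ a := Real.rpow_le_rpow_of_nonpos hy hyx ha0
      _ ≤ y ^ (-1 : ℝ) := Real.rpow_le_rpow_of_exponent_ge hy (hyx.trans hx.le) ha1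
      _ ≤ max y⁻¹ 1 := by rw [Real.rpow_neg_one]; exact le_max_left _ _

lemma hasDerivAt_Vp {ε w : ℝ} (hw : 0 < 1 + w) :
    HasDerivAt (Vp ε) ((1 + ε ^ 2) * (1 + w) ^ (ε ^ 2)) w := by
  have h := (((hasDerivAt_id' w).const_add 1).rpow_const (p := 1 + ε ^ 2)
    (Or.inl hw.ne')).sub_const 1
  rwa [one_mul, add_sub_cancel_left] at h

lemma hasDerivAt_const_mul_one_add_rpow {p w : ℝ} (c : ℝ) (hw : 0 < 1 + w) :
    HasDerivAt (fun z => c * (1 + z) ^ p) (c * (p * (1 + w) ^ (p - 1))) w := by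
  have h := (((hasDerivAt_id' w).const_add 1).rpow_const (p := p) (Or.inl hw.ne')).const_mul c
  rwa [one_mul] at h

lemma abs_Vp_add_sub_sub_le {ε m w v : ℝ} (hm : -1 < m) (hε : ε ^ 2 ≤ 1) (hw : m ≤ w)
    (hwv : m ≤ w + v) :
    |Vp ε (w + v) - Vp ε w - (1 + ε ^ 2) * (1 + w) ^ (ε ^ 2) * v|
      ≤ 2 * max (1 + m)⁻¹ 1 * ε ^ 2 * v ^ 2 := by
  have hseg : ∀ x ∈ uIcc w (w + v), m ≤ x := fun x hx => (le_min hw hwv).trans hx.1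
  have hpos : ∀ x ∈ uIcc w (w + v), 0 < 1 + x := fun x hx => by linarith [hseg x hx]
  have h := abs_sub_sub_mul_sub_le_of_hasDerivAt (K := 2 * max (1 + m)⁻¹ 1 * ε ^ 2)
    (fun x hx => hasDerivAt_Vp (hpos x hx))
    (fun x hx => hasDerivAt_const_mul_one_add_rpow (1 + ε ^ 2) (hpos x hx)) fun x hx => by
      have hA := rpow_le_max_inv_one (x := 1 + x) (y := 1 + m) (a := ε ^ 2 - 1) (by linarith)
        (by linarith [hseg x hx]) (by linarith) (by linarith [sq_nonneg ε])
      have hr := Real.rpow_nonneg (hpos x hx).le (ε ^ 2 - 1)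
      rw [abs_of_nonneg (by positivity)]
      calc (1 + ε ^ 2) * (ε ^ 2 * (1 + x) ^ (ε ^ 2 - 1))
          ≤ 2 * (ε ^ 2 * max (1 + m)⁻¹ 1) := by gcongr; linarith
        _ = 2 * max (1 + m)⁻¹ 1 * ε ^ 2 := by ring
  simpa only [add_sub_cancel_left] using h

lemma abs_one_add_mul_exp_sub_le {L p Λ : ℝ} (hp0 : 0 ≤ p) (hp1 : p ≤ 1) (hL : |L| ≤ Λ) :
    |(1 + p) * exp (p * L) - 1 - p * (1 + L)| ≤ exp Λ * (2 * Λ + 2 * Λ ^ 2) * p ^ 2 := by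
  have hf : ∀ q : ℝ, HasDerivAt (fun q => (1 + q) * exp (q * L))
      (exp (q * L) * (1 + (1 + q) * L)) q := fun q => by
    refine (((hasDerivAt_id' q).const_add 1).fun_mul (hasDerivAt_mul_const L).exp).congr_deriv ?_
    ring
  have hf' : ∀ q : ℝ, HasDerivAt (fun q => exp (q * L) * (1 + (1 + q) * L))
      (exp (q * L) * (2 * L + (1 + q) * L ^ 2)) q := fun q => by
    refine ((hasDerivAt_mul_const L).exp.fun_mul
      ((((hasDerivAt_id' q).const_add 1).mul_const L).const_add 1)).congr_deriv ?_
    ring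
  have h := abs_sub_sub_mul_sub_le_of_hasDerivAt (a := 0) (b := p)
    (K := exp Λ * (2 * Λ + 2 * Λ ^ 2)) (fun q _ => hf q) (fun q _ => hf' q) fun q hq => by
      rw [uIcc_of_le hp0] at hq
      have hqL : |q * L| ≤ Λ := by
        rw [abs_mul, abs_of_nonneg hq.1, ← one_mul Λ]
        exact mul_le_mul (hq.2.trans hp1) hL (abs_nonneg L) zero_le_one
      rw [abs_mul, abs_exp]
      gcongr
      · exact (le_abs_self _).trans hqL
      · calc |2 * L + (1 + q) * L ^ 2| ≤ |2 * L| + |(1 + q) * L ^ 2| := abs_add_le _ _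
          _ = 2 * |L| + (1 + q) * |L| ^ 2 := by
              rw [abs_mul, abs_mul, abs_two, abs_pow,
                abs_of_nonneg (show (0 : ℝ) ≤ 1 + q by linarith [hq.1])]
          _ ≤ 2 * Λ + 2 * Λ ^ 2 := by gcongr; linarith [hq.2]
  rw [mul_comm p (1 + L)]
  simpa using h

noncomputable def localRemainder (ε w v : ℝ) : ℝ := Vp ε (w + v) - Vp ε w - (1 + ε ^ 2 * gp w) * v

lemma abs_localRemainder_le {ε m w v Λ : ℝ} (hm : -1 < m) (hε : ε ^ 2 ≤ 1) (hw : m ≤ w)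
    (hwv : m ≤ w + v) (hΛ : |log (1 + w)| ≤ Λ) :
    |localRemainder ε w v|
      ≤ 2 * max (1 + m)⁻¹ 1 * ε ^ 2 * v ^ 2 + exp Λ * (2 * Λ + 2 * Λ ^ 2) * ε ^ 4 * |v| := by
  have hcoeff : |(1 + ε ^ 2) * (1 + w) ^ (ε ^ 2) - 1 - ε ^ 2 * gp w|
      ≤ exp Λ * (2 * Λ + 2 * Λ ^ 2) * ε ^ 4 := by
    rw [Real.rpow_def_of_pos (by linarith), mul_comm (log _), gp, show ε ^ 4 = (ε ^ 2) ^ 2 by ring]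
    exact abs_one_add_mul_exp_sub_le (sq_nonneg ε) hε hΛ
  calc |localRemainder ε w v|
      = |(Vp ε (w + v) - Vp ε w - (1 + ε ^ 2) * (1 + w) ^ (ε ^ 2) * v)
          + ((1 + ε ^ 2) * (1 + w) ^ (ε ^ 2) - 1 - ε ^ 2 * gp w) * v| := by
        rw [localRemainder]; ring_nf
    _ ≤ |Vp ε (w + v) - Vp ε w - (1 + ε ^ 2) * (1 + w) ^ (ε ^ 2) * v|
          + |(1 + ε ^ 2) * (1 + w) ^ (ε ^ 2) - 1 - ε ^ 2 * gp w| * |v| :=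
        (abs_add_le _ _).trans_eq (by rw [abs_mul])
    _ ≤ _ := add_le_add (abs_Vp_add_sub_sub_le hm hε hw hwv)
        (mul_le_mul_of_nonneg_right hcoeff (abs_nonneg v))

lemma RemR_apply_eq_sub (W : ℝ → ℝ → ℝ) (ε t : ℝ) (V : ℤ → ℝ) (n : ℤ) :
    RemR W ε t V n = localRemainder ε (W (ε * (n - t)) (ε ^ 3 * t)) (V n)
      - localRemainder ε (W (ε * ((n - 1 : ℤ) - t)) (ε ^ 3 * t)) (V (n - 1)) := by
  simp only [RemR, localRemainder]
  push_cast
  ring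

namespace l2norm

variable {x y : ℤ → ℝ}

lemma nonneg (x : ℤ → ℝ) : 0 ≤ l2norm x := Real.sqrt_nonneg _

lemma sq_eq (x : ℤ → ℝ) : l2norm x ^ 2 = ∑' n, x n ^ 2 :=
  Real.sq_sqrt (tsum_nonneg fun _ => sq_nonneg _)

lemma summable_sq_add (hx : Summable (x ^ 2)) (hy : Summable (y ^ 2)) :
    Summable ((x + y) ^ 2) :=
  .of_nonneg_of_le (fun _ => sq_nonneg _)
    (fun n => by simp only [Pi.pow_apply, Pi.add_apply]; nlinarith [sq_nonneg (x n - y n)])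
    ((hx.mul_left 2).add (hy.mul_left 2))

lemma summable_sq_comp_sub (hx : Summable (x ^ 2)) (k : ℤ) :
    Summable (fun n => x (n - k) ^ 2) :=
  (Equiv.subRight k).summable_iff.mpr hx

lemma comp_sub (x : ℤ → ℝ) (k : ℤ) : l2norm (fun n => x (n - k)) = l2norm x := by
  unfold l2norm
  exact congrArg Real.sqrt ((Equiv.subRight k).tsum_eq (fun n => x n ^ 2))

lemma const_mul (c : ℝ) (x : ℤ → ℝ) : l2norm (fun n => c * x n) = |c| * l2norm x := by
  simp only [l2norm, mul_pow, tsum_mul_left, Real.sqrt_mul (sq_nonneg c), Real.sqrt_sq_eq_abs]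

lemma le_of_abs_le (hy : Summable (y ^ 2)) (hxy : ∀ n, |x n| ≤ y n) : l2norm x ≤ l2norm y := by
  have hsq : ∀ n, x n ^ 2 ≤ y n ^ 2 := fun n =>
    sq_le_sq.mpr ((hxy n).trans (le_abs_self _))
  exact Real.sqrt_le_sqrt <|
    Summable.tsum_le_tsum hsq (.of_nonneg_of_le (fun _ => sq_nonneg _) hsq hy) hy

lemma add_le_of_nonneg (hx0 : 0 ≤ x) (hy0 : 0 ≤ y) (hx : Summable (x ^ 2))
    (hy : Summable (y ^ 2)) : l2norm (x + y) ≤ l2norm x + l2norm y := by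
  have hpow : ∀ z : ℤ → ℝ, (fun n => z n ^ (2 : ℝ)) = z ^ 2 := fun z => by
    ext n; simp
  have := Real.Lp_add_le_tsum_of_nonneg' (p := 2) one_le_two hx0 hy0
    (by rwa [hpow]) (by rwa [hpow])
  simpa only [l2norm, Real.sqrt_eq_rpow, Real.rpow_two, Pi.add_apply] using this

lemma comp_abs (x : ℤ → ℝ) : l2norm (fun n => |x n|) = l2norm x := by
  simp only [l2norm, sq_abs]

lemma sq_sq_le_tsum_mul (hx : Summable (x ^ 2)) (n : ℤ) :
    (x n ^ 2) ^ 2 ≤ (∑' n, x n ^ 2) * x n ^ 2 := by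
  rw [sq (x n ^ 2)]
  exact mul_le_mul_of_nonneg_right (hx.le_tsum n fun _ _ => sq_nonneg _) (sq_nonneg (x n))

lemma summable_sq_sq (hx : Summable (x ^ 2)) : Summable ((x ^ 2) ^ 2) :=
  .of_nonneg_of_le (fun _ => sq_nonneg _) (sq_sq_le_tsum_mul hx) (hx.mul_left _)

lemma sq_le (hx : Summable (x ^ 2)) : l2norm (x ^ 2) ≤ l2norm x ^ 2 := by
  have hS : 0 ≤ ∑' n, x n ^ 2 := tsum_nonneg fun _ => sq_nonneg _
  rw [sq_eq, ← Real.sqrt_sq hS, sq (∑' n, x n ^ 2), ← tsum_mul_left]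
  exact Real.sqrt_le_sqrt <|
    Summable.tsum_le_tsum (sq_sq_le_tsum_mul hx) (summable_sq_sq hx) (hx.mul_left _)

lemma sub_comp_sub_one_le {h k : ℤ → ℝ} (hk : Summable (k ^ 2)) (hhk : ∀ n, |h n| ≤ k n) :
    l2norm (fun n => h n - h (n - 1)) ≤ 2 * l2norm k := by
  have hk0 : 0 ≤ k := fun n => (abs_nonneg _).trans (hhk n)
  have hk' := summable_sq_comp_sub hk 1
  calc l2norm (fun n => h n - h (n - 1))
      ≤ l2norm (k + fun n => k (n - 1)) :=
        le_of_abs_le (summable_sq_add hk hk')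
          fun n => (abs_sub _ _).trans (add_le_add (hhk n) (hhk (n - 1)))
    _ ≤ l2norm k + l2norm (fun n => k (n - 1)) :=
        add_le_of_nonneg hk0 (fun n => hk0 (n - 1)) hk hk'
    _ = 2 * l2norm k := by rw [comp_sub]; ring

lemma sub_comp_sub_one_le_of_abs_le_mul_sq_add {h : ℤ → ℝ} {a b : ℝ} (ha : 0 ≤ a) (hb : 0 ≤ b)
    (hx : Summable (x ^ 2)) (hhx : ∀ n, |h n| ≤ a * x n ^ 2 + b * |x n|) :
    l2norm (fun n => h n - h (n - 1)) ≤ 2 * (a * l2norm x ^ 2 + b * l2norm x) := by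
  set u : ℤ → ℝ := fun n => a * x n ^ 2
  set v : ℤ → ℝ := fun n => b * |x n|
  have hu : Summable (u ^ 2) :=
    ((summable_sq_sq hx).mul_left (a ^ 2)).congr fun n => by simp only [u, Pi.pow_apply]; ring
  have hv : Summable (v ^ 2) :=
    (hx.mul_left (b ^ 2)).congr fun n => by simp only [v, Pi.pow_apply, mul_pow, sq_abs]
  calc l2norm (fun n => h n - h (n - 1)) ≤ 2 * l2norm (u + v) :=
        sub_comp_sub_one_le (summable_sq_add hu hv) hhx
    _ ≤ 2 * (l2norm u + l2norm v) := by
        gcongr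
        exact add_le_of_nonneg (fun n => by positivity) (fun n => by positivity) hu hv
    _ ≤ 2 * (a * l2norm x ^ 2 + b * l2norm x) := by
        simp only [u, v, const_mul, comp_abs, abs_of_nonneg ha, abs_of_nonneg hb]
        gcongr
        exact sq_le hx

end l2norm

lemma Memℓp.summable_sq {α : Type*} {x : α → ℝ} (hx : Memℓp x 2) : Summable (x ^ 2) := by
  simpa [Real.rpow_two, Pi.pow_def] using
    (memℓp_gen_iff (by norm_num : 0 < (2 : ℝ≥0∞).toReal)).mp hx

lemma mul_mem_Icc_of_mem_Icc_div {a b c t : ℝ} (hc : 0 < c) (ht : t ∈ Icc (-(a / c)) (b / c)) :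
    c * t ∈ Icc (-a) b := by
  rwa [mem_Icc, ← neg_div, div_le_iff₀' hc, le_div_iff₀' hc] at ht

theorem nonlinear_remainder_bound_general (τ₀ τ₁ : ℝ)
    (s : ℕ) (hs : 6 ≤ s) (W : ℝ → ℝ → ℝ)
    (hreg : RegCHs W s τ₀ τ₁)
    (rW : ℝ) (hrW : -1 < rW)
    (hWlow : ∀ ξ : ℝ, ∀ τ ∈ Set.Icc (-τ₀) τ₁, rW ≤ W ξ τ)
    (r R : ℝ) (hr : -1 < r) :
    ∃ C > (0 : ℝ), ∀ ε₀ ∈ Set.Ioc (0 : ℝ) 1,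
      ∀ 𝒲 : ℝ → ℝ → ℤ → ℝ,
        (∀ ε ∈ Set.Ioc (0 : ℝ) ε₀,
          (∀ t ∈ Set.Icc (-(τ₀/ε ^ 3)) (τ₁/ε ^ 3), Memℓp (𝒲 ε t) 2) ∧
          (∀ n : ℤ, ContinuousOn (fun t => 𝒲 ε t n)
            (Set.Icc (-(τ₀/ε ^ 3)) (τ₁/ε ^ 3))) ∧
          (∀ t ∈ Set.Icc (-(τ₀/ε ^ 3)) (τ₁/ε ^ 3), ∀ n : ℤ,
            r ≤ W (ε * ((n : ℝ) - t)) (ε ^ 3 * t) + 𝒲 ε t n ∧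
            W (ε * ((n : ℝ) - t)) (ε ^ 3 * t) + 𝒲 ε t n ≤ R)) →
        ∀ ε ∈ Set.Ioc (0 : ℝ) ε₀, ∀ t ∈ Set.Icc (-(τ₀/ε ^ 3)) (τ₁/ε ^ 3),
          l2norm (RemR W ε t (𝒲 ε t))
            ≤ C * (ε ^ 2 * (l2norm (𝒲 ε t)) ^ 2 + ε ^ 4 * l2norm (𝒲 ε t)
                + ε ^ ((9 : ℝ)/2)) := by
  obtain ⟨M, hM⟩ := hreg.exists_abs_le (by omega)
  set m := min rW r
  set Λ := max |log (1 + m)| |log (1 + M)|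
  set a := 2 * max (1 + m)⁻¹ 1
  set b := exp Λ * (2 * Λ + 2 * Λ ^ 2)
  have hm : -1 < m := lt_min hrW hr
  have ha : 0 ≤ a := by positivity
  have hb : 0 ≤ b := by positivity
  refine ⟨2 * (a + b), by positivity, fun ε₀ hε₀ 𝒲 h𝒲 ε hε t ht => ?_⟩
  obtain ⟨hℓ2, -, hbd⟩ := h𝒲 ε hε
  have hε1 : ε ^ 2 ≤ 1 := pow_le_one₀ hε.1.le (hε.2.trans hε₀.2)
  have hτ := mul_mem_Icc_of_mem_Icc_div (pow_pos hε.1 3) ht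
  have hsite (n : ℤ) : |localRemainder ε (W (ε * (n - t)) (ε ^ 3 * t)) (𝒲 ε t n)|
      ≤ a * ε ^ 2 * 𝒲 ε t n ^ 2 + b * ε ^ 4 * |𝒲 ε t n| := by
    have hWM := (le_abs_self _).trans (hM (ε * (n - t)) _ hτ)
    have hWm : m ≤ W (ε * (n - t)) (ε ^ 3 * t) := (min_le_left rW r).trans (hWlow _ _ hτ)
    have hΛ : |log (1 + W (ε * (n - t)) (ε ^ 3 * t))| ≤ Λ :=
      abs_le_max_abs_abs (log_le_log (by linarith) (by linarith))
        (log_le_log (by linarith) (by linarith))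
    exact (abs_localRemainder_le hm hε1 hWm ((min_le_right rW r).trans (hbd t ht n).1)
      hΛ).trans_eq (by ring)
  calc l2norm (RemR W ε t (𝒲 ε t))
      ≤ 2 * (a * ε ^ 2 * l2norm (𝒲 ε t) ^ 2 + b * ε ^ 4 * l2norm (𝒲 ε t)) := by
        rw [funext (RemR_apply_eq_sub W ε t (𝒲 ε t))]
        exact l2norm.sub_comp_sub_one_le_of_abs_le_mul_sq_add (by positivity) (by positivity)
          (hℓ2 t ht).summable_sq hsite
    _ ≤ 2 * (a + b) * (ε ^ 2 * l2norm (𝒲 ε t) ^ 2 + ε ^ 4 * l2norm (𝒲 ε t)) := by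
        have := l2norm.nonneg (𝒲 ε t)
        nlinarith [mul_nonneg ha (by positivity : 0 ≤ ε ^ 4 * l2norm (𝒲 ε t)),
          mul_nonneg hb (by positivity : 0 ≤ ε ^ 2 * l2norm (𝒲 ε t) ^ 2)]
    _ ≤ _ := mul_le_mul_of_nonneg_left (le_add_of_nonneg_right (rpow_nonneg hε.1.le _))
          (by positivity)

/-- bound for the nonlinear remainder: there is `C_{r,R,W} > 0`, independent
of `ε` and of `ε₀`, such that for every `ε₀ ∈ (0,1]`, every perturbation family `𝒲` that is
continuous with values in `l²(ℤ)` and keeps `W + 𝒲` within `[r, R]`, and all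
`ε ∈ (0,ε₀]` and `t ∈ [−τ₀ε^{−3}, τ₁ε^{−3}]`,
`‖ℛ(W,𝒲)(t)‖_{l²} ≤ C (ε²‖𝒲(t)‖² + ε⁴‖𝒲(t)‖ + ε^{9/2})`. -/
theorem nonlinear_remainder_bound (τ₀ τ₁ : ℝ) (hτ₀ : 0 ≤ τ₀) (hτ₁ : 0 ≤ τ₁)
    (s : ℕ) (hs : 6 ≤ s) (W : ℝ → ℝ → ℝ)
    (hreg : RegCHs W s τ₀ τ₁)
    (hpde : SolvesLogKdV W τ₀ τ₁)
    (rW : ℝ) (hrW : -1 < rW)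
    (hWlow : ∀ ξ : ℝ, ∀ τ ∈ Set.Icc (-τ₀) τ₁, rW ≤ W ξ τ)
    (r R : ℝ) (hr : -1 < r) (hR : 0 < R) :
    ∃ C > (0 : ℝ), ∀ ε₀ ∈ Set.Ioc (0 : ℝ) 1,
      ∀ 𝒲 : ℝ → ℝ → ℤ → ℝ,
        (∀ ε ∈ Set.Ioc (0 : ℝ) ε₀,
          (∀ t ∈ Set.Icc (-(τ₀/ε ^ 3)) (τ₁/ε ^ 3), Memℓp (𝒲 ε t) 2) ∧
          (∀ n : ℤ, ContinuousOn (fun t => 𝒲 ε t n)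
            (Set.Icc (-(τ₀/ε ^ 3)) (τ₁/ε ^ 3))) ∧
          (∀ t ∈ Set.Icc (-(τ₀/ε ^ 3)) (τ₁/ε ^ 3), ∀ n : ℤ,
            r ≤ W (ε * ((n : ℝ) - t)) (ε ^ 3 * t) + 𝒲 ε t n ∧
            W (ε * ((n : ℝ) - t)) (ε ^ 3 * t) + 𝒲 ε t n ≤ R)) →
        ∀ ε ∈ Set.Ioc (0 : ℝ) ε₀, ∀ t ∈ Set.Icc (-(τ₀/ε ^ 3)) (τ₁/ε ^ 3),
          l2norm (RemR W ε t (𝒲 ε t))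
            ≤ C * (ε ^ 2 * (l2norm (𝒲 ε t)) ^ 2 + ε ^ 4 * l2norm (𝒲 ε t)
                + ε ^ ((9 : ℝ)/2)) :=
  nonlinear_remainder_bound_general τ₀ τ₁ s hs W hreg rW hrW hWlow r R hr
end

section
/- Let ε > 0, μ > −1, r ∈ (−1, 0), and let w ∈ L²(ℝ) ∩ L^∞(ℝ) satisfy w(z) ≥ r for a.e. z and solve the fixed-point equation w(z) = (1/(1+μ)) ∫_{−1}^{1} Λ(y) Ṽ_ε'(w(z−y)) dy for a.e. z ∈ ℝ. Then w has a continuous representative, and in the sense of distributions on ℝ it satisfies the differential advance-delay equation (1+μ) w''(z) = Ṽ_ε'(w(z+1)) − 2 Ṽ_ε'(w(z)) + Ṽ_ε'(w(z−1)). -/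
open MeasureTheory Real Filter Set

/-- The hat function `Λ(z) = max(1 − |z|, 0)`. -/
noncomputable def hatf (z : ℝ) : ℝ := max (1 - |z|) 0

lemma hatf_nonneg (z : ℝ) : 0 ≤ hatf z := le_max_right _ _

lemma hatf_le_one (z : ℝ) : hatf z ≤ 1 :=
  max_le (by linarith [abs_nonneg z]) zero_le_one

lemma hatf_zero {z : ℝ} (h : 1 ≤ |z|) : hatf z = 0 := max_eq_right (by linarith)

lemma hatf_cont : Continuous hatf :=
  (continuous_const.sub continuous_abs).max continuous_const

lemma hatf_hcs : HasCompactSupport hatf := by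
  apply HasCompactSupport.intro (isCompact_Icc (a := (-1 : ℝ)) (b := 1))
  intro x hx
  simp only [Set.mem_Icc, not_and_or, not_le] at hx
  apply hatf_zero
  rcases hx with h | h
  · rw [abs_of_neg (by linarith)]; linarith
  · rw [abs_of_pos (by linarith)]; linarith

/-- Restrict a hat-weighted integral over `ℝ` to the interval `[-1,1]`. -/
lemma hat_integral_restrict (f : ℝ → ℝ) :
    ∫ y, hatf y * f y = ∫ y in (-1 : ℝ)..1, hatf y * f y := by
  rw [intervalIntegral.integral_of_le (by norm_num : (-1 : ℝ) ≤ 1)]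
  refine (setIntegral_eq_integral_of_forall_compl_eq_zero fun y hy => ?_).symm
  simp only [Set.mem_Ioc, not_and_or, not_lt, not_le] at hy
  have h1 : 1 ≤ |y| := by
    rcases hy with h | h
    · rw [abs_of_nonpos (by linarith)]; linarith
    · rw [abs_of_pos (by linarith)]; linarith
  simp [hatf_zero h1]

/-- Key computation: `∫ Λ(y) φ''(x+y) dy = φ(x+1) − 2φ(x) + φ(x−1)`. -/
lemma hat_phi (φ : ℝ → ℝ) (hφ : ContDiff ℝ 2 φ) (x : ℝ) :
    ∫ y, hatf y * deriv (deriv φ) (x + y) = φ (x + 1) - 2 * φ x + φ (x - 1) := by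
  set φ₁ := deriv φ with hφ₁def
  set φ₂ := deriv φ₁ with hφ₂def
  have h2 : ContDiff ℝ ((1 : WithTop ℕ∞) + 1) φ := by
    have : ((1 : WithTop ℕ∞) + 1) = 2 := by norm_num
    rw [this]; exact hφ
  have hφ1 : ContDiff ℝ 1 φ₁ := (contDiff_succ_iff_deriv.mp h2).2.2
  have hd1 : ∀ t, HasDerivAt φ (φ₁ t) t := fun t =>
    ((hφ.differentiable (by norm_num)) t).hasDerivAt
  have hd2 : ∀ t, HasDerivAt φ₁ (φ₂ t) t := fun t =>
    ((hφ1.differentiable (by norm_num)) t).hasDerivAt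
  have hc1 : Continuous φ₁ := hφ1.continuous
  have hc2 : Continuous φ₂ := hφ1.continuous_deriv le_rfl
  have hiic : Continuous fun y => hatf y * φ₂ (x + y) :=
    hatf_cont.mul (hc2.comp (continuous_const.add continuous_id))
  rw [hat_integral_restrict]
  rw [← intervalIntegral.integral_add_adjacent_intervals (a := (-1 : ℝ)) (b := 0) (c := 1)
      (hiic.intervalIntegrable _ _) (hiic.intervalIntegrable _ _)]
  have hFTC : ∀ a b : ℝ, ∫ y in a..b, φ₁ (x + y) = φ (x + b) - φ (x + a) := by
    intro a b
    exact intervalIntegral.integral_eq_sub_of_hasDerivAt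
      (fun y _ => HasDerivAt.comp_const_add x y (hd1 (x + y)))
      ((hc1.comp (continuous_const.add continuous_id)).intervalIntegrable _ _)
  have hp1 : ∫ y in (-1 : ℝ)..0, hatf y * φ₂ (x + y)
      = φ₁ x - (φ x - φ (x - 1)) := by
    have e1 : ∫ y in (-1 : ℝ)..0, hatf y * φ₂ (x + y)
        = ∫ y in (-1 : ℝ)..0, (1 + y) * φ₂ (x + y) := by
      apply intervalIntegral.integral_congr
      intro y hy
      rw [Set.uIcc_of_le (by norm_num : (-1 : ℝ) ≤ 0)] at hy
      have : hatf y = 1 + y := by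
        rw [hatf, abs_of_nonpos hy.2, max_eq_left (by linarith [hy.1])]; ring
      simp only [this]
    have e2 : ∫ y in (-1 : ℝ)..0, (1 + y) * φ₂ (x + y)
        = (1 + (0:ℝ)) * φ₁ (x + 0) - (1 + (-1:ℝ)) * φ₁ (x + (-1))
          - ∫ y in (-1 : ℝ)..0, 1 * φ₁ (x + y) := by
      apply intervalIntegral.integral_mul_deriv_eq_deriv_mul
        (fun y _ => (hasDerivAt_id y).const_add 1)
        (fun y _ => HasDerivAt.comp_const_add x y (hd2 (x + y)))
        (continuous_const.intervalIntegrable _ _)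
        ((hc2.comp (continuous_const.add continuous_id)).intervalIntegrable _ _)
    rw [e1, e2]
    simp only [one_mul]
    rw [hFTC]
    have hx1 : x + (-1 : ℝ) = x - 1 := by ring
    rw [hx1]
    norm_num
  have hp2 : ∫ y in (0 : ℝ)..1, hatf y * φ₂ (x + y)
      = -φ₁ x + (φ (x + 1) - φ x) := by
    have e1 : ∫ y in (0 : ℝ)..1, hatf y * φ₂ (x + y)
        = ∫ y in (0 : ℝ)..1, (1 - y) * φ₂ (x + y) := by
      apply intervalIntegral.integral_congr
      intro y hy
      rw [Set.uIcc_of_le (by norm_num : (0 : ℝ) ≤ 1)] at hy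
      have : hatf y = 1 - y := by
        rw [hatf, abs_of_nonneg hy.1, max_eq_left (by linarith [hy.2])]
      simp only [this]
    have e2 : ∫ y in (0 : ℝ)..1, (1 - y) * φ₂ (x + y)
        = (1 - (1:ℝ)) * φ₁ (x + 1) - (1 - (0:ℝ)) * φ₁ (x + 0)
          - ∫ y in (0 : ℝ)..1, (-1) * φ₁ (x + y) := by
      apply intervalIntegral.integral_mul_deriv_eq_deriv_mul
        (fun y _ => (hasDerivAt_id y).const_sub 1)
        (fun y _ => HasDerivAt.comp_const_add x y (hd2 (x + y)))
        (continuous_const.intervalIntegrable _ _)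
        ((hc2.comp (continuous_const.add continuous_id)).intervalIntegrable _ _)
    rw [e1, e2]
    rw [intervalIntegral.integral_const_mul, hFTC]
    norm_num
    ring
  rw [hp1, hp2]
  ring

/-- Bounded measurable times continuous compactly supported is integrable. -/
lemma integrable_bdd_mul (g θ : ℝ → ℝ) (hg : Measurable g) {C : ℝ}
    (hgb : ∀ x, |g x| ≤ C) (hθc : Continuous θ) (hθs : HasCompactSupport θ) :
    Integrable (fun x => g x * θ x) volume := by
  have hC : 0 ≤ C := le_trans (abs_nonneg _) (hgb 0)
  have habs : Integrable (fun x => C * |θ x|) volume :=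
    ((hθc.abs.integrable_of_hasCompactSupport
      (hθs.comp_left (g := abs) abs_zero)).const_mul C)
  refine habs.mono' ((hg.mul hθc.measurable).aestronglyMeasurable) ?_
  refine Eventually.of_forall fun x => ?_
  rw [Real.norm_eq_abs, abs_mul]
  exact mul_le_mul_of_nonneg_right (hgb x) (abs_nonneg _)

/-- Swap the hat-convolution against a test function. -/
lemma conv_swap (g : ℝ → ℝ) (hg : Measurable g) {C : ℝ} (hgb : ∀ x, |g x| ≤ C)
    (ψ : ℝ → ℝ) (hψc : Continuous ψ) (hψs : HasCompactSupport ψ) :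
    ∫ z, (∫ y, hatf y * g (z - y)) * ψ z = ∫ x, g x * ∫ y, hatf y * ψ (x + y) := by
  have hC : 0 ≤ C := le_trans (abs_nonneg _) (hgb 0)
  obtain ⟨S, hS⟩ := hψs.exists_bound_of_continuous hψc
  have hS0 : 0 ≤ S := le_trans (norm_nonneg _) (hS 0)
  obtain ⟨A, hA⟩ := (hψs.isBounded).subset_closedBall 0
  rw [Real.closedBall_eq_Icc, zero_sub, zero_add] at hA
  -- reflect the convolution
  have step1 : ∀ z : ℝ, ∫ y, hatf y * g (z - y) = ∫ y, hatf (z - y) * g y := by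
    intro z
    have h := integral_sub_left_eq_self (fun t => hatf t * g (z - t)) volume z
    simp only [sub_sub_cancel] at h
    exact h.symm
  have e1 : (fun z => (∫ y, hatf y * g (z - y)) * ψ z)
      = fun z => ∫ y, (hatf (z - y) * g y) * ψ z := by
    funext z
    rw [step1 z, MeasureTheory.integral_mul_const]
  rw [show (∫ z, (∫ y, hatf y * g (z - y)) * ψ z) = ∫ z, ∫ y, (hatf (z - y) * g y) * ψ z
      from congrArg _ e1]
  -- Fubini
  have hFint : Integrable (Function.uncurry fun z y => (hatf (z - y) * g y) * ψ z)
      (volume.prod volume) := by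
    have hmeas : AEStronglyMeasurable (Function.uncurry fun z y => (hatf (z - y) * g y) * ψ z)
        (volume.prod volume) := by
      apply Measurable.aestronglyMeasurable
      exact (((hatf_cont.measurable.comp (measurable_fst.sub measurable_snd)).mul
        (hg.comp measurable_snd)).mul (hψc.measurable.comp measurable_fst))
    have hind1 : Integrable (fun z : ℝ => (S * C) * (Icc (-A) A).indicator (fun _ => (1:ℝ)) z)
        volume := by
      refine Integrable.const_mul ?_ _
      rw [integrable_indicator_iff measurableSet_Icc]
      exact integrableOn_const measure_Icc_lt_top.ne
    have hind2 : Integrable (fun y : ℝ => (Icc (-A-1) (A+1)).indicator (fun _ => (1:ℝ)) y)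
        volume := by
      rw [integrable_indicator_iff measurableSet_Icc]
      exact integrableOn_const measure_Icc_lt_top.ne
    refine (hind1.mul_prod hind2).mono' hmeas (Eventually.of_forall fun p => ?_)
    rcases p with ⟨z, y⟩
    simp only [Function.uncurry_apply_pair]
    by_cases hz : z ∈ Icc (-A) A
    · by_cases hy : y ∈ Icc (-A-1) (A+1)
      · rw [Set.indicator_of_mem hz, Set.indicator_of_mem hy]
        rw [Real.norm_eq_abs, abs_mul, abs_mul, abs_of_nonneg (hatf_nonneg _)]
        have h1 : hatf (z - y) * |g y| ≤ 1 * C :=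
          mul_le_mul (hatf_le_one _) (hgb y) (abs_nonneg _) zero_le_one
        have h2 : |ψ z| ≤ S := by rw [← Real.norm_eq_abs]; exact hS z
        calc hatf (z - y) * |g y| * |ψ z| ≤ (1 * C) * S :=
              mul_le_mul h1 h2 (abs_nonneg _) (by positivity)
          _ = S * C * 1 * 1 := by ring
      · have h0 : hatf (z - y) = 0 := by
          apply hatf_zero
          simp only [Set.mem_Icc, not_and_or, not_le] at hy
          simp only [Set.mem_Icc] at hz
          rcases hy with h | h
          · have : 1 < z - y := by linarith [hz.1]
            calc (1:ℝ) ≤ z - y := this.le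
              _ ≤ |z - y| := le_abs_self _
          · have : 1 < -(z - y) := by linarith [hz.2]
            calc (1:ℝ) ≤ -(z - y) := this.le
              _ ≤ |z - y| := neg_le_abs _
        rw [h0, Set.indicator_of_notMem hy]
        simp [mul_nonneg, hS0, hC]
    · have h0 : ψ z = 0 := by
        apply image_eq_zero_of_notMem_tsupport
        exact fun hmem => hz (hA hmem)
      rw [h0, Set.indicator_of_notMem hz]
      simp
  rw [MeasureTheory.integral_integral_swap hFint]
  -- now compute the inner integral for each y
  congr 1
  funext y
  have e2 : ∀ z : ℝ, (hatf (z - y) * g y) * ψ z = g y * (hatf (z - y) * ψ z) := fun z => by ring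
  simp only [e2]
  rw [MeasureTheory.integral_const_mul]
  congr 1
  have h := integral_add_right_eq_self (μ := volume) (fun z => hatf (z - y) * ψ z) y
  simp only [add_sub_cancel_right] at h
  rw [← h]
  have hcomm : (fun t : ℝ => hatf t * ψ (t + y)) = fun t => hatf t * ψ (y + t) := by
    funext t; rw [add_comm]
  rw [hcomm]

/-- if `w ∈ L² ∩ L^∞`, `w ≥ r > −1` a.e., solves (a.e.) the fixed-point
equation `w(z) = (1/(1+μ)) ∫_{−1}^1 Λ(y) Ṽ_ε'(w(z−y)) dy`, then `w` has a continuous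
representative which satisfies, in the sense of distributions,
`(1+μ) w'' = Ṽ_ε'(w(·+1)) − 2Ṽ_ε'(w) + Ṽ_ε'(w(·−1))`. -/
theorem fixed_point_to_advance_delay
    (ε μ r : ℝ) (hε : 0 < ε) (hμ : -1 < μ) (hr : r ∈ Set.Ioo (-1 : ℝ) 0)
    (w : ℝ → ℝ)
    (hw2 : MeasureTheory.MemLp w 2 MeasureTheory.volume)
    (hwi : MeasureTheory.MemLp w ⊤ MeasureTheory.volume)
    (hlow : ∀ᵐ z ∂MeasureTheory.volume, r ≤ w z)
    (hfix : ∀ᵐ z ∂MeasureTheory.volume,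
      w z = (1/(1 + μ)) * ∫ y in (-1 : ℝ)..1, hatf y * Vp ε (w (z - y))) :
    ∃ wc : ℝ → ℝ, Continuous wc ∧ w =ᵐ[MeasureTheory.volume] wc ∧
      ∀ φ : ℝ → ℝ, ContDiff ℝ (⊤ : ℕ∞) φ → HasCompactSupport φ →
        (1 + μ) * ∫ z : ℝ, wc z * deriv (deriv φ) z
          = ∫ z : ℝ, (Vp ε (wc (z + 1)) - 2 * Vp ε (wc z) + Vp ε (wc (z - 1))) * φ z := by
  have h1μ : (0:ℝ) < 1 + μ := by linarith
  have h1μ' : (1:ℝ) + μ ≠ 0 := ne_of_gt h1μ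
  have hr1 : (-1:ℝ) < r := hr.1
  -- essential sup bound
  set M : ℝ := (eLpNormEssSup w volume).toReal with hM
  have hMae : ∀ᵐ z ∂(volume : Measure ℝ), |w z| ≤ M := by
    have htop : eLpNormEssSup w volume < ⊤ := by
      have := hwi.2; rwa [eLpNorm_exponent_top] at this
    filter_upwards [ae_le_eLpNormEssSup (f := w) (μ := volume)] with z hz
    have h2 : (‖w z‖₊ : ENNReal).toReal ≤ M := ENNReal.toReal_mono htop.ne hz
    simpa [Real.norm_eq_abs] using h2
  -- measurable representative, truncated
  have hma := hwi.1
  set w' : ℝ → ℝ := hma.mk w with hw'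
  have hw'm : Measurable w' := hma.measurable_mk
  have hww' : w =ᵐ[volume] w' := hma.ae_eq_mk
  set wt : ℝ → ℝ := fun z => max r (min (w' z) M) with hwtdef
  have hwtm : Measurable wt := measurable_const.max (hw'm.min measurable_const)
  have hwtr : ∀ z, r ≤ wt z := fun z => le_max_left _ _
  have hwtM : ∀ z, wt z ≤ max r M := fun z => max_le_max le_rfl (min_le_right _ _)
  have hwteq : w =ᵐ[volume] wt := by
    filter_upwards [hww', hlow, hMae] with z h1 h2 h3
    have hwM : w z ≤ M := le_trans (le_abs_self _) h3
    simp only [hwtdef]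
    rw [← h1, min_eq_left hwM, max_eq_right h2]
  -- the composed nonlinearity
  set g : ℝ → ℝ := fun z => Vp ε (wt z) with hgdef
  have hbase : ∀ z, (0:ℝ) < 1 + wt z := fun z => by have := hwtr z; linarith
  set C : ℝ := (1 + max r M) ^ (1 + ε ^ 2) + 1 with hCdef
  have hgb : ∀ z, |g z| ≤ C := by
    intro z
    have h0 : (0:ℝ) ≤ (1 + wt z) ^ (1 + ε ^ 2) := Real.rpow_nonneg (hbase z).le _
    have h1 : (1 + wt z) ^ (1 + ε ^ 2) ≤ (1 + max r M) ^ (1 + ε ^ 2) :=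
      Real.rpow_le_rpow (hbase z).le (by linarith [hwtM z]) (by positivity)
    simp only [hgdef, Vp, hCdef]
    exact abs_le.mpr ⟨by linarith, by linarith⟩
  have hgm : Measurable g := by
    have he : g = fun z => Real.exp (Real.log (1 + wt z) * (1 + ε ^ 2)) - 1 := by
      funext z
      simp only [hgdef, Vp]
      rw [Real.rpow_def_of_pos (hbase z)]
    rw [he]
    exact (Real.measurable_exp.comp
      ((Real.measurable_log.comp (measurable_const.add hwtm)).mul measurable_const)).sub
      measurable_const
  -- the continuous representative
  set wc : ℝ → ℝ := fun z => (1/(1+μ)) * ∫ y, hatf y * g (z - y) with hwcdef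
  have hgl : LocallyIntegrable g volume :=
    (memLp_top_of_bound hgm.aestronglyMeasurable C
      (Eventually.of_forall fun z => by rw [Real.norm_eq_abs]; exact hgb z)).locallyIntegrable
      le_top
  have hwccont : Continuous wc := by
    have hc : wc = fun z =>
        (1/(1+μ)) * convolution hatf g (ContinuousLinearMap.mul ℝ ℝ) volume z := by
      funext z
      simp only [hwcdef, convolution, ContinuousLinearMap.mul_apply']
    rw [hc]
    exact continuous_const.mul
      ((hatf_hcs.continuous_convolution_left _ hatf_cont hgl))
  -- a.e. identification of w with wc
  have interval_eq : ∀ z : ℝ,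
      ∫ y in (-1:ℝ)..1, hatf y * g (z - y) = ∫ y, hatf y * g (z - y) := fun z =>
    (hat_integral_restrict (fun y => g (z - y))).symm
  have hprod : ∀ᵐ z ∂(volume : Measure ℝ), ∀ᵐ y ∂(volume : Measure ℝ),
      w (z - y) = wt (z - y) := by
    have hq : Measure.QuasiMeasurePreserving (fun pr : ℝ × ℝ => pr.1 - pr.2)
        ((volume : Measure ℝ).prod volume) volume :=
      quasiMeasurePreserving_sub volume volume
    exact Measure.ae_ae_of_ae_prod (hwteq.comp_tendsto hq.tendsto_ae)
  have hwwc : w =ᵐ[volume] wc := by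
    filter_upwards [hfix, hprod] with z h1 h2
    rw [h1]
    simp only [hwcdef]
    congr 1
    rw [← interval_eq z]
    apply intervalIntegral.integral_congr_ae
    filter_upwards [h2] with y hy _
    rw [hy]
  refine ⟨wc, hwccont, hwwc, ?_⟩
  intro φ hφ hφs
  have hφ2 : ContDiff ℝ 2 φ := hφ.of_le (WithTop.coe_le_coe.mpr le_top)
  have h2' : ContDiff ℝ ((1 : WithTop ℕ∞) + 1) φ := by
    have he : ((1 : WithTop ℕ∞) + 1) = 2 := by norm_num
    rw [he]; exact hφ2
  have hφ1 : ContDiff ℝ 1 (deriv φ) := (contDiff_succ_iff_deriv.mp h2').2.2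
  have hψc : Continuous (deriv (deriv φ)) := hφ1.continuous_deriv le_rfl
  have hψs : HasCompactSupport (deriv (deriv φ)) := hφs.deriv.deriv
  -- left-hand side
  have hL : (1 + μ) * ∫ z, wc z * deriv (deriv φ) z
      = ∫ z, (∫ y, hatf y * g (z - y)) * deriv (deriv φ) z := by
    rw [← MeasureTheory.integral_const_mul]
    congr 1
    funext z
    simp only [hwcdef]
    field_simp
  rw [hL, conv_swap g hgm hgb (deriv (deriv φ)) hψc hψs]
  have hhat : ∀ x : ℝ, ∫ y, hatf y * deriv (deriv φ) (x + y)
      = φ (x + 1) - 2 * φ x + φ (x - 1) := fun x => hat_phi φ hφ2 x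
  simp only [hhat]
  -- integrability of the pieces
  have hφc : Continuous φ := hφ.continuous
  have hcs1 : HasCompactSupport fun x : ℝ => φ (x + 1) :=
    hφs.comp_homeomorph (Homeomorph.addRight (1:ℝ))
  have hcs3 : HasCompactSupport fun x : ℝ => φ (x - 1) := by
    have := hφs.comp_homeomorph (Homeomorph.addRight (-1:ℝ))
    simpa [Function.comp_def, sub_eq_add_neg] using this
  have hg1m : Measurable (fun z : ℝ => g (z + 1)) := hgm.comp (measurable_add_const 1)
  have hg3m : Measurable (fun z : ℝ => g (z - 1)) := hgm.comp (measurable_sub_const 1)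
  have hg1b : ∀ z : ℝ, |g (z + 1)| ≤ C := fun z => hgb _
  have hg3b : ∀ z : ℝ, |g (z - 1)| ≤ C := fun z => hgb _
  have i1 : Integrable (fun x => g x * φ (x + 1)) volume :=
    integrable_bdd_mul g _ hgm hgb (hφc.comp (continuous_add_right 1)) hcs1
  have i2 : Integrable (fun x => g x * φ x) volume :=
    integrable_bdd_mul g _ hgm hgb hφc hφs
  have i3 : Integrable (fun x => g x * φ (x - 1)) volume :=
    integrable_bdd_mul g _ hgm hgb (hφc.comp (continuous_sub_right 1)) hcs3
  have j1 : Integrable (fun z => g (z + 1) * φ z) volume :=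
    integrable_bdd_mul _ _ hg1m hg1b hφc hφs
  have j3 : Integrable (fun z => g (z - 1) * φ z) volume :=
    integrable_bdd_mul _ _ hg3m hg3b hφc hφs
  -- split the integral of the left side
  have split1 : ∫ x, g x * (φ (x + 1) - 2 * φ x + φ (x - 1))
      = (∫ x, g x * φ (x + 1)) - 2 * (∫ x, g x * φ x) + ∫ x, g x * φ (x - 1) := by
    have he : (fun x => g x * (φ (x + 1) - 2 * φ x + φ (x - 1)))
        = fun x => (g x * φ (x + 1) - 2 * (g x * φ x)) + g x * φ (x - 1) := by
      funext x; ring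
    have i12 : Integrable (fun x => g x * φ (x + 1) - 2 * (g x * φ x)) volume :=
      i1.sub (i2.const_mul 2)
    have e1 : ∫ x, ((g x * φ (x + 1) - 2 * (g x * φ x)) + g x * φ (x - 1))
        = (∫ x, (g x * φ (x + 1) - 2 * (g x * φ x))) + ∫ x, g x * φ (x - 1) :=
      MeasureTheory.integral_add i12 i3
    have e2 : ∫ x, (g x * φ (x + 1) - 2 * (g x * φ x))
        = (∫ x, g x * φ (x + 1)) - ∫ x, 2 * (g x * φ x) :=
      MeasureTheory.integral_sub i1 (i2.const_mul 2)
    have e3 : ∫ x, 2 * (g x * φ x) = 2 * ∫ x, g x * φ x :=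
      MeasureTheory.integral_const_mul 2 _
    rw [he, e1, e2, e3]
  -- translations
  have t1 : ∫ x, g x * φ (x + 1) = ∫ z, g (z - 1) * φ z := by
    have h := integral_add_right_eq_self (μ := volume) (fun x => g (x - 1) * φ x) 1
    simp only [add_sub_cancel_right] at h
    exact h
  have t3 : ∫ x, g x * φ (x - 1) = ∫ z, g (z + 1) * φ z := by
    have h := integral_add_right_eq_self (μ := volume) (fun x => g (x + 1) * φ x) (-1)
    simp only [neg_add_cancel_right] at h
    simp only [← sub_eq_add_neg] at h
    exact h
  -- recombine
  have split2 : ∫ z, (g (z + 1) - 2 * g z + g (z - 1)) * φ z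
      = (∫ z, g (z + 1) * φ z) - 2 * (∫ z, g z * φ z) + ∫ z, g (z - 1) * φ z := by
    have he : (fun z => (g (z + 1) - 2 * g z + g (z - 1)) * φ z)
        = fun z => (g (z + 1) * φ z - 2 * (g z * φ z)) + g (z - 1) * φ z := by
      funext z; ring
    have j12 : Integrable (fun z => g (z + 1) * φ z - 2 * (g z * φ z)) volume :=
      j1.sub (i2.const_mul 2)
    have e1 : ∫ z, ((g (z + 1) * φ z - 2 * (g z * φ z)) + g (z - 1) * φ z)
        = (∫ z, (g (z + 1) * φ z - 2 * (g z * φ z))) + ∫ z, g (z - 1) * φ z :=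
      MeasureTheory.integral_add j12 j3
    have e2 : ∫ z, (g (z + 1) * φ z - 2 * (g z * φ z))
        = (∫ z, g (z + 1) * φ z) - ∫ z, 2 * (g z * φ z) :=
      MeasureTheory.integral_sub j1 (i2.const_mul 2)
    have e3 : ∫ z, 2 * (g z * φ z) = 2 * ∫ z, g z * φ z :=
      MeasureTheory.integral_const_mul 2 _
    rw [he, e1, e2, e3]
  have step : ∫ x, g x * (φ (x + 1) - 2 * φ x + φ (x - 1))
      = ∫ z, (g (z + 1) - 2 * g z + g (z - 1)) * φ z := by
    rw [split1, split2, t1, t3]; ring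
  rw [step]
  -- replace g by Vp ε ∘ wc almost everywhere
  have hwteqc : wt =ᵐ[volume] wc := hwteq.symm.trans hwwc
  have hgwc : g =ᵐ[volume] fun z => Vp ε (wc z) := by
    filter_upwards [hwteqc] with z hz
    simp only [hgdef]
    rw [hz]
  have hsh1 : (fun z : ℝ => g (z + 1)) =ᵐ[volume] fun z => Vp ε (wc (z + 1)) := by
    have h := hgwc.comp_tendsto
      ((measurePreserving_add_right volume 1).quasiMeasurePreserving.tendsto_ae)
    simpa [Function.comp_def] using h
  have hsh3 : (fun z : ℝ => g (z - 1)) =ᵐ[volume] fun z => Vp ε (wc (z - 1)) := by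
    have h := hgwc.comp_tendsto
      ((measurePreserving_add_right volume (-1)).quasiMeasurePreserving.tendsto_ae)
    simpa [Function.comp_def, sub_eq_add_neg] using h
  apply MeasureTheory.integral_congr_ae
  filter_upwards [hsh1, hgwc, hsh3] with z h1 h2 h3
  rw [h1, h2, h3]
end
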